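/- Let M be a finite set and f : M → M a function. For k ≥ 1 let P_k be the number of nonempty subsets A ⊆ M with #A ≤ k and f(A) = A. Then in ℤ[[q]]: (1 − q) · ∑_{k ≥ 1} P_k q^k = ∏_{m=1}^{#M} (1 + q^m)^{D_m(f)} − 1. -/

import Mathlib

open Function Finset

/-- The orbit `{x, f x, …, f^[m-1] x}` as a finset. -/
def IsPeriodicOrbit {M : Type*} [DecidableEq M] (f : M → M) (m : ℕ) (s : Finset M) : Prop :=
  ∃ x : M, s = (Finset.range m).image (fun i => f^[i] x) ∧ s.card = m ∧ f^[m] x = x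

/-- `doldD f m` is the number of periodic orbits of `f` of length `m`. -/
noncomputable def doldD {M : Type*} [Fintype M] [DecidableEq M] (f : M → M) (m : ℕ) : ℕ :=
  Nat.card {s : Finset M // IsPeriodicOrbit f m s}

set_option linter.unusedSectionVars false

section Helpers
variable {M : Type*} [Fintype M] [DecidableEq M] (f : M → M)

/-- orbit of a periodic point -/
noncomputable def orb (f : M → M) (x : M) : Finset M :=
  (Finset.range (minimalPeriod f x)).image (fun i => f^[i] x)

variable {f}

lemma orb_card (x : M) : (orb f x).card = minimalPeriod f x := by
  rw [orb, Finset.card_image_of_injOn, Finset.card_range]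
  intro a ha b hb hab
  exact iterate_injOn_Iio_minimalPeriod (by simpa using ha) (by simpa using hb) hab

lemma iterate_mem_orb (hx : x ∈ periodicPts f) (j : ℕ) : f^[j] x ∈ orb f x := by
  rw [orb, Finset.mem_image]
  exact ⟨j % minimalPeriod f x,
    Finset.mem_range.2 (Nat.mod_lt _ (minimalPeriod_pos_of_mem_periodicPts hx)),
    iterate_mod_minimalPeriod_eq⟩

lemma mem_orb_self (hx : x ∈ periodicPts f) : x ∈ orb f x := iterate_mem_orb hx 0

lemma minimalPeriod_iterate (hx : x ∈ periodicPts f) (i : ℕ) :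
    minimalPeriod f (f^[i] x) = minimalPeriod f x :=
  minimalPeriod_apply_iterate hx i

lemma iterate_mem_periodicPts (hx : x ∈ periodicPts f) (i : ℕ) :
    f^[i] x ∈ periodicPts f := by
  obtain ⟨n, hn, h⟩ := hx
  exact ⟨n, hn, h.apply_iterate i⟩

lemma orb_iterate (hx : x ∈ periodicPts f) (i : ℕ) : orb f (f^[i] x) = orb f x := by
  apply Finset.eq_of_subset_of_card_le
  · intro y hy
    rw [orb, Finset.mem_image] at hy
    obtain ⟨j, _, rfl⟩ := hy
    rw [← iterate_add_apply]
    exact iterate_mem_orb hx _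
  · rw [orb_card, orb_card, minimalPeriod_iterate hx]

lemma orb_isPeriodicOrbit (hx : x ∈ periodicPts f) :
    IsPeriodicOrbit f (orb f x).card (orb f x) := by
  refine ⟨x, ?_, rfl, ?_⟩
  · rw [orb_card]; rfl
  · rw [orb_card]; exact iterate_minimalPeriod

lemma eq_orb_of_isPeriodicOrbit {m : ℕ} {s : Finset M} (h : IsPeriodicOrbit f m s)
    (hm : 0 < m) {x : M} (hx : x ∈ s) : s = orb f x ∧ x ∈ periodicPts f := by
  obtain ⟨x₀, rfl, hcard, hper⟩ := h
  have hx₀ : x₀ ∈ periodicPts f := ⟨m, hm, hper⟩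
  have hsub : (Finset.range m).image (fun i => f^[i] x₀) ⊆ orb f x₀ := by
    intro y hy
    rw [Finset.mem_image] at hy
    obtain ⟨j, _, rfl⟩ := hy
    exact iterate_mem_orb hx₀ j
  have heq : (Finset.range m).image (fun i => f^[i] x₀) = orb f x₀ := by
    apply Finset.eq_of_subset_of_card_le hsub
    rw [hcard, orb_card]
    exact IsPeriodicPt.minimalPeriod_le hm hper
  rw [heq] at hx ⊢
  rw [orb, Finset.mem_image] at hx
  obtain ⟨i, _, rfl⟩ := hx
  exact ⟨(orb_iterate hx₀ i).symm, iterate_mem_periodicPts hx₀ i⟩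

lemma orb_image (hx : x ∈ periodicPts f) : (orb f x).image f = orb f x := by
  have hT : 0 < minimalPeriod f x := minimalPeriod_pos_of_mem_periodicPts hx
  apply Finset.eq_of_subset_of_card_le
  · intro y hy
    rw [Finset.mem_image] at hy
    obtain ⟨z, hz, rfl⟩ := hy
    rw [orb, Finset.mem_image] at hz
    obtain ⟨j, _, rfl⟩ := hz
    have h1 : f (f^[j] x) = f^[j + 1] x := (iterate_succ_apply' f j x).symm
    rw [h1]
    exact iterate_mem_orb hx _
  · -- orb ⊆ image
    apply Finset.card_le_card
    intro y hy
    rw [orb, Finset.mem_image] at hy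
    obtain ⟨j, _, rfl⟩ := hy
    rw [Finset.mem_image]
    refine ⟨f^[j + minimalPeriod f x - 1] x, iterate_mem_orb hx _, ?_⟩
    have h1 : f (f^[j + minimalPeriod f x - 1] x) = f^[j + minimalPeriod f x - 1 + 1] x :=
      (iterate_succ_apply' f _ x).symm
    have h2 : j + minimalPeriod f x - 1 + 1 = j + minimalPeriod f x := by omega
    rw [h1, h2, iterate_add_apply, iterate_minimalPeriod]

section Invariant
variable {A : Finset M} (hA : A.image f = A)
include hA

lemma inv_maps {x : M} (hx : x ∈ A) : f x ∈ A := by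
  rw [← hA]
  exact Finset.mem_image_of_mem f hx

lemma inv_iterate {x : M} (hx : x ∈ A) (i : ℕ) : f^[i] x ∈ A := by
  induction i with
  | zero => exact hx
  | succ n ih => rw [iterate_succ_apply']; exact inv_maps hA ih

lemma inv_injOn : Set.InjOn f A := by
  apply Finset.injOn_of_card_image_eq
  rw [hA]

lemma inv_periodic {x : M} (hx : x ∈ A) : x ∈ periodicPts f := by
  obtain ⟨a, b, hne, hab⟩ := Finite.exists_ne_map_eq_of_infinite (fun i : ℕ => f^[i] x)
  wlog hlt : a < b generalizing a b
  · exact this b a hne.symm hab.symm (by omega)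
  set k := b - a with hk
  have key : ∀ c, f^[c] x = f^[c + k] x → x = f^[k] x := by
    intro c
    induction c with
    | zero => intro h; simpa using h
    | succ n ih =>
      intro h
      apply ih
      have h1 : n + 1 + k = (n + k) + 1 := by omega
      rw [h1, iterate_succ_apply', iterate_succ_apply'] at h
      exact inv_injOn hA (inv_iterate hA hx n) (inv_iterate hA hx _) h
  have hx' : x = f^[k] x := key a (by have : a + k = b := by omega
                                      rw [this]; exact hab)
  exact ⟨k, by omega, hx'.symm⟩

lemma inv_orb_subset {x : M} (hx : x ∈ A) : orb f x ⊆ A := by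
  intro y hy
  rw [orb, Finset.mem_image] at hy
  obtain ⟨j, _, rfl⟩ := hy
  exact inv_iterate hA hx j

end Invariant
end Helpers

section Main
variable {M : Type*} [Fintype M] [DecidableEq M]

instance (f : M → M) (m : ℕ) (s : Finset M) : Decidable (IsPeriodicOrbit f m s) := by
  unfold IsPeriodicOrbit; infer_instance

/-- the set of all periodic orbits -/
def orbSet (f : M → M) : Finset (Finset M) :=
  Finset.univ.filter (fun s => s.Nonempty ∧ IsPeriodicOrbit f s.card s)

variable {f : M → M}

lemma mem_orbSet {s : Finset M} :
    s ∈ orbSet f ↔ s.Nonempty ∧ IsPeriodicOrbit f s.card s := by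
  rw [orbSet, Finset.mem_filter]
  simp

lemma orb_mem_orbSet (hx : x ∈ periodicPts f) : orb f x ∈ orbSet f :=
  mem_orbSet.2 ⟨⟨x, mem_orb_self hx⟩, orb_isPeriodicOrbit hx⟩

lemma orbSet_eq_orb {s : Finset M} (hs : s ∈ orbSet f) {x : M} (hx : x ∈ s) :
    s = orb f x ∧ x ∈ periodicPts f := by
  obtain ⟨hne, hp⟩ := mem_orbSet.1 hs
  exact eq_orb_of_isPeriodicOrbit hp (Finset.card_pos.2 hne) hx

lemma orbSet_disjoint {s t : Finset M} (hs : s ∈ orbSet f) (ht : t ∈ orbSet f)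
    (hne : s ≠ t) : Disjoint s t := by
  rw [Finset.disjoint_left]
  intro x hxs hxt
  exact hne ((orbSet_eq_orb hs hxs).1.trans (orbSet_eq_orb ht hxt).1.symm)

lemma orbSet_image {s : Finset M} (hs : s ∈ orbSet f) : s.image f = s := by
  obtain ⟨hne, _⟩ := mem_orbSet.1 hs
  obtain ⟨x, hx⟩ := hne
  obtain ⟨rfl, hper⟩ := orbSet_eq_orb hs hx
  exact orb_image hper

lemma doldD_eq {m : ℕ} (hm : 1 ≤ m) (f : M → M) :
    doldD f m = ((orbSet f).filter (fun s => s.card = m)).card := by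
  classical
  rw [doldD, Nat.card_eq_fintype_card, Fintype.card_subtype]
  congr 1
  ext s
  simp only [Finset.mem_filter, Finset.mem_univ, true_and, mem_orbSet]
  constructor
  · rintro ⟨x, hs, hcard, hp⟩
    exact ⟨⟨Finset.card_pos.1 (by omega), by rw [hcard]; exact ⟨x, hs, hcard, hp⟩⟩, hcard⟩
  · rintro ⟨⟨_, hp⟩, hcard⟩
    rw [← hcard]
    exact hp

lemma count_eq (f : M → M) (n : ℕ) :
    ((orbSet f).powerset.filter (fun T => ∑ s ∈ T, s.card = n)).card =
    (Finset.univ.filter (fun A : Finset M => A.image f = A ∧ A.card = n)).card := by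
  classical
  apply Finset.card_bij (fun T _ => T.biUnion id)
  · -- maps into target
    rintro T hT
    rw [Finset.mem_filter, Finset.mem_powerset] at hT
    obtain ⟨hTsub, hTsum⟩ := hT
    rw [Finset.mem_filter]
    refine ⟨Finset.mem_univ _, ?_, ?_⟩
    · rw [Finset.biUnion_image]
      apply Finset.biUnion_congr rfl
      intro s hs
      exact orbSet_image (hTsub hs)
    · rw [Finset.card_biUnion (t := id) (fun s hs t ht hst =>
        orbSet_disjoint (hTsub hs) (hTsub ht) hst)]
      exact hTsum
  · -- injective
    intro T₁ hT₁ T₂ hT₂ heq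
    rw [Finset.mem_filter, Finset.mem_powerset] at hT₁ hT₂
    have key : ∀ T₁ T₂ : Finset (Finset M), T₁ ⊆ orbSet f → T₂ ⊆ orbSet f →
        T₁.biUnion id = T₂.biUnion id → T₁ ⊆ T₂ := by
      intro T₁ T₂ h₁ h₂ he s hs
      obtain ⟨hne, _⟩ := mem_orbSet.1 (h₁ hs)
      obtain ⟨x, hx⟩ := hne
      have hxU : x ∈ T₂.biUnion id := by
        rw [← he, Finset.mem_biUnion]; exact ⟨s, hs, hx⟩
      rw [Finset.mem_biUnion] at hxU
      obtain ⟨t, ht, hxt⟩ := hxU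
      have : s = t := ((orbSet_eq_orb (h₁ hs) hx).1.trans
        (orbSet_eq_orb (h₂ ht) hxt).1.symm)
      rwa [this]
    exact Finset.Subset.antisymm (key _ _ hT₁.1 hT₂.1 heq) (key _ _ hT₂.1 hT₁.1 heq.symm)
  · -- surjective
    intro A hA
    rw [Finset.mem_filter] at hA
    obtain ⟨_, hinv, hcard⟩ := hA
    refine ⟨(orbSet f).filter (· ⊆ A), ?_, ?_⟩
    · have hU : ((orbSet f).filter (· ⊆ A)).biUnion id = A := by
        apply Finset.Subset.antisymm
        · intro x hx
          rw [Finset.mem_biUnion] at hx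
          obtain ⟨s, hs, hxs⟩ := hx
          exact (Finset.mem_filter.1 hs).2 hxs
        · intro x hx
          rw [Finset.mem_biUnion]
          refine ⟨orb f x, ?_, mem_orb_self (inv_periodic hinv hx)⟩
          rw [Finset.mem_filter]
          exact ⟨orb_mem_orbSet (inv_periodic hinv hx), inv_orb_subset hinv hx⟩
      rw [Finset.mem_filter, Finset.mem_powerset]
      refine ⟨Finset.filter_subset _ _, ?_⟩
      have h2 := Finset.card_biUnion (s := (orbSet f).filter (· ⊆ A)) (t := id)
        (fun s hs t ht hst =>
          orbSet_disjoint (Finset.mem_filter.1 hs).1 (Finset.mem_filter.1 ht).1 hst)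
      rw [hU, hcard] at h2
      simpa using h2.symm
    · apply Finset.Subset.antisymm
      · intro x hx
        rw [Finset.mem_biUnion] at hx
        obtain ⟨s, hs, hxs⟩ := hx
        exact (Finset.mem_filter.1 hs).2 hxs
      · intro x hx
        rw [Finset.mem_biUnion]
        refine ⟨orb f x, ?_, mem_orb_self (inv_periodic hinv hx)⟩
        rw [Finset.mem_filter]
        exact ⟨orb_mem_orbSet (inv_periodic hinv hx), inv_orb_subset hinv hx⟩

end Main

section PS
open PowerSeries
variable {M : Type*} [Fintype M] [DecidableEq M] (f : M → M)

lemma prod_eq :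
    ∏ m ∈ Finset.Icc 1 (Fintype.card M), ((1 + (X : PowerSeries ℤ)^m)^(doldD f m)) =
    ∑ T ∈ (orbSet f).powerset, (X : PowerSeries ℤ) ^ (∑ s ∈ T, s.card) := by
  classical
  have hmap : ∀ s ∈ orbSet f, s.card ∈ Finset.Icc 1 (Fintype.card M) := by
    intro s hs
    rw [Finset.mem_Icc]
    refine ⟨Finset.card_pos.2 (mem_orbSet.1 hs).1, ?_⟩
    rw [← Finset.card_univ]
    exact Finset.card_le_univ s
  calc ∏ m ∈ Finset.Icc 1 (Fintype.card M), ((1 + (X : PowerSeries ℤ)^m)^(doldD f m))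
      = ∏ m ∈ Finset.Icc 1 (Fintype.card M),
          ∏ s ∈ (orbSet f).filter (fun s => s.card = m), ((X : PowerSeries ℤ)^s.card + 1) := by
        refine Finset.prod_congr rfl fun m hm => ?_
        rw [Finset.mem_Icc] at hm
        rw [doldD_eq hm.1 f]
        calc ((1 + (X : PowerSeries ℤ)^m)^((orbSet f).filter (fun s => s.card = m)).card)
            = ∏ _s ∈ (orbSet f).filter (fun s => s.card = m), (1 + (X : PowerSeries ℤ)^m) :=
              (Finset.prod_const _).symm
          _ = ∏ s ∈ (orbSet f).filter (fun s => s.card = m), ((X : PowerSeries ℤ)^s.card + 1) :=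
              Finset.prod_congr rfl fun s hs => by
                rw [(Finset.mem_filter.1 hs).2, add_comm]
    _ = ∏ s ∈ orbSet f, ((X : PowerSeries ℤ)^s.card + 1) :=
        Finset.prod_fiberwise_of_maps_to hmap _
    _ = ∑ T ∈ (orbSet f).powerset, (X : PowerSeries ℤ) ^ (∑ s ∈ T, s.card) := by
        rw [Finset.prod_add]
        refine Finset.sum_congr rfl fun T hT => ?_
        rw [Finset.prod_const_one, mul_one, Finset.prod_pow_eq_pow_sum]

lemma Pnat_succ (n : ℕ) :
    (Finset.univ.filter (fun A : Finset M => A.Nonempty ∧ A.card ≤ n+1 ∧ A.image f = A)).card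
    = (Finset.univ.filter (fun A : Finset M => A.Nonempty ∧ A.card ≤ n ∧ A.image f = A)).card
      + (Finset.univ.filter (fun A : Finset M => A.image f = A ∧ A.card = n+1)).card := by
  classical
  rw [← Finset.card_union_of_disjoint ?_]
  · congr 1
    ext A
    simp only [Finset.mem_union, Finset.mem_filter, Finset.mem_univ, true_and]
    constructor
    · rintro ⟨hne, hle, hinv⟩
      by_cases h : A.card = n+1
      · exact Or.inr ⟨hinv, h⟩
      · exact Or.inl ⟨hne, by omega, hinv⟩
    · rintro (⟨hne, hle, hinv⟩ | ⟨hinv, hcard⟩)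
      · exact ⟨hne, by omega, hinv⟩
      · exact ⟨Finset.card_pos.1 (by omega), by omega, hinv⟩
  · rw [Finset.disjoint_left]
    rintro A hA hA'
    rw [Finset.mem_filter] at hA hA'
    have h1 := hA.2.2.1
    have h2 := hA'.2.2
    omega

lemma mkval (k : ℕ) :
    (if k = 0 then 0 else
      (Nat.card {A : Finset M // A.Nonempty ∧ A.card ≤ k ∧ A.image f = A} : ℤ)) =
    ((Finset.univ.filter
      (fun A : Finset M => A.Nonempty ∧ A.card ≤ k ∧ A.image f = A)).card : ℤ) := by
  classical
  rcases Nat.eq_zero_or_pos k with rfl | hk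
  · rw [if_pos rfl]
    have : (Finset.univ.filter
        (fun A : Finset M => A.Nonempty ∧ A.card ≤ 0 ∧ A.image f = A)) = ∅ := by
      ext A
      simp only [Finset.mem_filter, Finset.mem_univ, true_and, Finset.notMem_empty, iff_false]
      rintro ⟨hne, hle, -⟩
      have := Finset.card_pos.2 hne
      omega
    rw [this]
    simp
  · rw [if_neg (by omega), Nat.card_eq_fintype_card, Fintype.card_subtype]

lemma coeff_prod_eq (n : ℕ) :
    (PowerSeries.coeff n)
        (∏ m ∈ Finset.Icc 1 (Fintype.card M), ((1 + (X : PowerSeries ℤ)^m)^(doldD f m))) =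
    ((Finset.univ.filter (fun A : Finset M => A.image f = A ∧ A.card = n)).card : ℤ) := by
  classical
  rw [prod_eq, map_sum]
  simp only [PowerSeries.coeff_X_pow]
  have h : ∀ T ∈ (orbSet f).powerset,
      (if n = ∑ s ∈ T, s.card then (1:ℤ) else 0) =
      (if (∑ s ∈ T, s.card) = n then (1:ℤ) else 0) := fun T _ => by simp [eq_comm]
  rw [Finset.sum_congr rfl h, Finset.sum_boole, count_eq]
end PS

theorem borsukUlam_genFun
    {M : Type*} [Fintype M] [DecidableEq M] (f : M → M) :
    (1 - (PowerSeries.X : PowerSeries ℤ)) *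
        (PowerSeries.mk fun k => if k = 0 then 0 else
          (Nat.card {A : Finset M // A.Nonempty ∧ A.card ≤ k ∧ A.image f = A} : ℤ)) =
      ∏ m ∈ Finset.Icc 1 (Fintype.card M),
        ((1 + (PowerSeries.X : PowerSeries ℤ) ^ m) ^ doldD f m) - 1 := by
  classical
  have hmk : (PowerSeries.mk fun k => if k = 0 then 0 else
      (Nat.card {A : Finset M // A.Nonempty ∧ A.card ≤ k ∧ A.image f = A} : ℤ)) =
      PowerSeries.mk fun k => ((Finset.univ.filter
        (fun A : Finset M => A.Nonempty ∧ A.card ≤ k ∧ A.image f = A)).card : ℤ) := by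
    apply PowerSeries.ext
    intro k
    rw [PowerSeries.coeff_mk, PowerSeries.coeff_mk]
    exact mkval f k
  rw [hmk]
  apply PowerSeries.ext
  intro n
  rw [sub_mul, one_mul, map_sub, map_sub, coeff_prod_eq, PowerSeries.coeff_one]
  cases n with
  | zero =>
    rw [PowerSeries.coeff_zero_X_mul, PowerSeries.coeff_mk, if_pos rfl]
    have h0 : (Finset.univ.filter
        (fun A : Finset M => A.Nonempty ∧ A.card ≤ 0 ∧ A.image f = A)).card = 0 := by
      rw [Finset.card_eq_zero]
      ext A
      simp only [Finset.mem_filter, Finset.mem_univ, true_and, Finset.notMem_empty, iff_false]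
      rintro ⟨hne, hle, -⟩
      have := Finset.card_pos.2 hne
      omega
    have h1 : (Finset.univ.filter
        (fun A : Finset M => A.image f = A ∧ A.card = 0)) = {∅} := by
      ext A
      simp only [Finset.mem_filter, Finset.mem_univ, true_and, Finset.mem_singleton,
        Finset.card_eq_zero]
      constructor
      · rintro ⟨-, rfl⟩; rfl
      · rintro rfl; exact ⟨rfl, rfl⟩
    rw [h0, h1]
    simp
  | succ n =>
    rw [PowerSeries.coeff_succ_X_mul, PowerSeries.coeff_mk, PowerSeries.coeff_mk,
      if_neg (by omega)]
    have key := Pnat_succ f n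
    push_cast
    omega
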